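/- arXiv:2509.01580 — 5 statements merged into one kernel-verified Lean document; each statement's English description precedes it below -/
import Mathlib

section
/- Let γ : [0,1] → ℝ^d be a continuous curve satisfying the increasing chord property (i.e., for all 0 ≤ t1 ≤ t2 ≤ t3 ≤ t4 ≤ 1, dist(γ(t2), γ(t3)) ≤ dist(γ(t1), γ(t4))). Then γ is monotone in the direction q = γ(1) − γ(0), i.e., the function τ ↦ ⟨γ(τ), q⟩ is monotone (nondecreasing). -/
open RealInnerProductSpace

/-- A curve `γ` has the increasing chord property if whenever `t1 ≤ t2 ≤ t3 ≤ t4` in `[0,1]`,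
the chord `γ(t2)γ(t3)` is no longer than the chord `γ(t1)γ(t4)`. -/
def IncreasingChordProperty {E : Type*} [PseudoMetricSpace E] (γ : ℝ → E) : Prop :=
  ∀ t1 t2 t3 t4 : ℝ, 0 ≤ t1 → t1 ≤ t2 → t2 ≤ t3 → t3 ≤ t4 → t4 ≤ 1 →
    dist (γ t2) (γ t3) ≤ dist (γ t1) (γ t4)

theorem monotone_in_endpoint_direction (d : ℕ)
    (γ : ℝ → EuclideanSpace ℝ (Fin d))
    (hcont : ContinuousOn γ (Set.Icc 0 1))
    (hic : IncreasingChordProperty γ) :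
    MonotoneOn (fun τ => ⟪γ τ, γ 1 - γ 0⟫) (Set.Icc (0:ℝ) 1) := by
  intro x hx y hy hxy
  have h1 := hic 0 0 x y le_rfl le_rfl hx.1 hxy hy.2
  have h2 := hic x y 1 1 hx.1 hxy hy.2 le_rfl le_rfl
  simp only [dist_eq_norm] at h1 h2
  have e1 : ‖γ 0 - γ x‖ ^ 2 ≤ ‖γ 0 - γ y‖ ^ 2 :=
    pow_le_pow_left₀ (norm_nonneg _) h1 2
  have e2 : ‖γ y - γ 1‖ ^ 2 ≤ ‖γ x - γ 1‖ ^ 2 :=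
    pow_le_pow_left₀ (norm_nonneg _) h2 2
  rw [norm_sub_sq_real, norm_sub_sq_real] at e1 e2
  simp only [inner_sub_right]
  have c1 := real_inner_comm (γ 0) (γ x)
  have c2 := real_inner_comm (γ 0) (γ y)
  nlinarith [e1, e2]
end

section
/- Let γ : [0,1] → ℝ^d be a rectifiable curve monotone (nondecreasing) in each of d linearly independent directions q_1, …, q_d, with s = γ(0), t = γ(1). Let Q be the matrix with rows q_1, …, q_d, and let r_i denote the i-th column of Q⁻¹. Then the arc length of γ is at most the sum over i of |⟨t − s, q_i⟩| · |r_i|, i.e., the total length of d successive edges of the bounding parallelotope leading from s to t. -/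
/-! In the basis `r_i` dual to the `q_i` every vector is `x = ∑ ⟪x, q_i⟫ r_i`, so each chord of `γ`
is at most `∑ |Δ⟪γ, q_i⟫| ‖r_i‖`. Summed over a partition, the increments of each monotone
coordinate `⟪γ, q_i⟫` telescope to at most `⟪t - s, q_i⟫`. -/

open RealInnerProductSpace Matrix

open scoped ENNReal in
theorem eVariationOn_le_sum_mul_of_edist_le {α E F ι : Type*} [LinearOrder α]
    [PseudoEMetricSpace E] [PseudoEMetricSpace F] [Fintype ι]
    {f : α → E} {g : ι → α → F} {s : Set α} (C : ι → ℝ≥0∞)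
    (h : ∀ a ∈ s, ∀ b ∈ s, edist (f a) (f b) ≤ ∑ i, C i * edist (g i a) (g i b)) :
    eVariationOn f s ≤ ∑ i, C i * eVariationOn (g i) s := by
  refine iSup_le fun ⟨n, u, hu, us⟩ => ?_
  calc ∑ k ∈ Finset.range n, edist (f (u (k + 1))) (f (u k))
      ≤ ∑ k ∈ Finset.range n, ∑ i, C i * edist (g i (u (k + 1))) (g i (u k)) :=
        Finset.sum_le_sum fun k _ => h _ (us _) _ (us _)
    _ = ∑ i, C i * ∑ k ∈ Finset.range n, edist (g i (u (k + 1))) (g i (u k)) := by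
        rw [Finset.sum_comm]; simp only [Finset.mul_sum]
    _ ≤ ∑ i, C i * eVariationOn (g i) s := by
        gcongr with i; exact eVariationOn.sum_le hu us

namespace Matrix

variable {ι : Type*} [Fintype ι]

theorem inner_eq_mulVec_apply {Q : Matrix ι ι ℝ} {q : ι → EuclideanSpace ℝ ι}
    (hQ : ∀ i j, Q i j = q i j) (x : EuclideanSpace ℝ ι) (i : ι) :
    ⟪x, q i⟫ = (Q *ᵥ WithLp.ofLp x) i := by
  simp [EuclideanSpace.inner_eq_star_dotProduct, mulVec, hQ, dotProduct_comm]

theorem norm_toLp_col (Q : Matrix ι ι ℝ) (i : ι) :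
    ‖WithLp.toLp 2 (Qᵀ i)‖ = Real.sqrt (∑ j, Q j i ^ 2) := by
  simp [EuclideanSpace.norm_eq]

variable [DecidableEq ι]

theorem toLp_eq_sum_mulVec_smul_col {Q : Matrix ι ι ℝ} (hQ : IsUnit Q) (x : EuclideanSpace ℝ ι) :
    x = ∑ i, (Q *ᵥ WithLp.ofLp x) i • WithLp.toLp 2 (Q⁻¹ᵀ i) := by
  have hx : WithLp.ofLp x = Q⁻¹ *ᵥ (Q *ᵥ WithLp.ofLp x) := by
    rw [mulVec_mulVec, nonsing_inv_mul _ ((isUnit_iff_isUnit_det Q).mp hQ), one_mulVec]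
  ext j
  conv_lhs => rw [hx]
  simp [mulVec, dotProduct, mul_comm]

theorem norm_le_sum_abs_mulVec_mul_norm_col {Q : Matrix ι ι ℝ} (hQ : IsUnit Q)
    (x : EuclideanSpace ℝ ι) :
    ‖x‖ ≤ ∑ i, |(Q *ᵥ WithLp.ofLp x) i| * ‖WithLp.toLp 2 (Q⁻¹ᵀ i)‖ := by
  conv_lhs => rw [toLp_eq_sum_mulVec_smul_col hQ x]
  refine (norm_sum_le _ _).trans_eq ?_
  simp only [norm_smul, Real.norm_eq_abs]

theorem edist_le_sum_mul_edist_mulVec_apply {Q : Matrix ι ι ℝ} (hQ : IsUnit Q)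
    (x y : EuclideanSpace ℝ ι) :
    edist x y ≤ ∑ i, ENNReal.ofReal ‖WithLp.toLp 2 (Q⁻¹ᵀ i)‖ *
      edist ((Q *ᵥ WithLp.ofLp x) i) ((Q *ᵥ WithLp.ofLp y) i) := by
  simp only [edist_dist, dist_eq_norm, Real.norm_eq_abs, ← ENNReal.ofReal_mul (norm_nonneg _)]
  rw [← ENNReal.ofReal_sum_of_nonneg fun i _ => by positivity]
  refine ENNReal.ofReal_le_ofReal ((norm_le_sum_abs_mulVec_mul_norm_col hQ (x - y)).trans_eq ?_)
  simp [mulVec_sub, mul_comm]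

end Matrix

theorem length_le_parallelotope_edges_general (d : ℕ)
    (γ : ℝ → EuclideanSpace ℝ (Fin d))
    (q : Fin d → EuclideanSpace ℝ (Fin d))
    (hli : LinearIndependent ℝ q)
    (hmono : ∀ i, MonotoneOn (fun τ => ⟪γ τ, q i⟫) (Set.Icc (0:ℝ) 1))
    (Q : Matrix (Fin d) (Fin d) ℝ) (hQ : ∀ i j, Q i j = q i j) :
    (eVariationOn γ (Set.Icc 0 1)).toReal ≤
      ∑ i, |⟪γ 1 - γ 0, q i⟫| * Real.sqrt (∑ j, (Q⁻¹ j i) ^ 2) := by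
  have hQ_unit : IsUnit Q := by
    have hrows : Q.row = fun i => WithLp.ofLp (q i) := funext fun i => funext (hQ i)
    rw [← Matrix.linearIndependent_rows_iff_isUnit, hrows]
    exact hli.map' (WithLp.linearEquiv 2 ℝ (Fin d → ℝ)).toLinearMap (LinearEquiv.ker _)
  have hvar : ∀ i, eVariationOn (fun τ => ⟪γ τ, q i⟫) (Set.Icc 0 1) =
      ENNReal.ofReal ⟪γ 1 - γ 0, q i⟫ := fun i => by
    have h01 : (0 : ℝ) ≤ 1 := zero_le_one
    simpa [inner_sub_left] using (hmono i).eVariationOn_eq ⟨le_rfl, h01⟩ ⟨h01, le_rfl⟩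
  refine ENNReal.toReal_le_of_le_ofReal (by positivity) ?_
  calc eVariationOn γ (Set.Icc 0 1)
      ≤ ∑ i, ENNReal.ofReal ‖WithLp.toLp 2 (Q⁻¹ᵀ i)‖ *
          eVariationOn (fun τ => ⟪γ τ, q i⟫) (Set.Icc 0 1) :=
        eVariationOn_le_sum_mul_of_edist_le _ fun a _ b _ => by
          simpa only [Matrix.inner_eq_mulVec_apply hQ] using
            Matrix.edist_le_sum_mul_edist_mulVec_apply hQ_unit (γ a) (γ b)
    _ ≤ ENNReal.ofReal (∑ i, |⟪γ 1 - γ 0, q i⟫| * Real.sqrt (∑ j, (Q⁻¹ j i) ^ 2)) := by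
        rw [ENNReal.ofReal_sum_of_nonneg fun i _ => by positivity]
        gcongr with i
        rw [hvar, Matrix.norm_toLp_col, mul_comm, ENNReal.ofReal_mul (abs_nonneg _)]
        gcongr
        exact le_abs_self _

theorem length_le_parallelotope_edges (d : ℕ)
    (γ : ℝ → EuclideanSpace ℝ (Fin d))
    (q : Fin d → EuclideanSpace ℝ (Fin d))
    (hli : LinearIndependent ℝ q)
    (hmono : ∀ i, MonotoneOn (fun τ => ⟪γ τ, q i⟫) (Set.Icc (0:ℝ) 1))
    (hrect : eVariationOn γ (Set.Icc 0 1) ≠ ⊤)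
    (Q : Matrix (Fin d) (Fin d) ℝ) (hQ : ∀ i j, Q i j = q i j) :
    (eVariationOn γ (Set.Icc 0 1)).toReal ≤
      ∑ i, |⟪γ 1 - γ 0, q i⟫| * Real.sqrt (∑ j, (Q⁻¹ j i) ^ 2) :=
  length_le_parallelotope_edges_general d γ q hli hmono Q hQ
end

section
/- Let Q be a d × d real lower triangular matrix whose rows are unit vectors with Q_{11} = 1 and Q_{ii} = sin α for 2 ≤ i ≤ d, where 0 < α < π/2. Let Q_{uv} be the minor obtained by deleting row u and column v. Then: (i) if u > v, det(Q_{uv}) = 0; (ii) det(Q_{11}) = (sin α)^{d−1}, and det(Q_{uu}) = (sin α)^{d−2} for u ≥ 2; (iii) if 1 = u < v, |det(Q_{1v})| ≤ cos α · (sin α)^{d−v}; (iv) if 1 < u < v, |det(Q_{uv})| ≤ cos α · (sin α)^{d+u−v−2}. -/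
open Real

theorem minor_determinant_bounds (n : ℕ) (d : ℕ) (hd : d = n + 2) (α : ℝ)
    (hα : 0 < α) (hα' : α < π / 2)
    (Q : Matrix (Fin (n + 2)) (Fin (n + 2)) ℝ)
    (hlower : ∀ i j : Fin (n + 2), i < j → Q i j = 0)
    (hunit : ∀ i : Fin (n + 2), ∑ j, (Q i j) ^ 2 = 1)
    (hdiag0 : Q 0 0 = 1)
    (hdiag : ∀ i : Fin (n + 2), i ≠ 0 → Q i i = Real.sin α) :
    -- (i) if u > v, det(Q_{uv}) = 0
    (∀ u v : Fin (n + 2), v < u →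
      (Q.submatrix u.succAbove v.succAbove).det = 0) ∧
    -- (ii) det(Q_{11}) = (sin α)^{d-1}, det(Q_{uu}) = (sin α)^{d-2} for u ≥ 2
    ((Q.submatrix (Fin.succAbove 0) (Fin.succAbove 0)).det = (Real.sin α) ^ (d - 1)) ∧
    (∀ u : Fin (n + 2), u ≠ 0 →
      (Q.submatrix u.succAbove u.succAbove).det = (Real.sin α) ^ (d - 2)) ∧
    -- (iii) if 1 = u < v, |det(Q_{1v})| ≤ cos α (sin α)^{d-v}
    (∀ v : Fin (n + 2), v ≠ 0 →
      |(Q.submatrix (Fin.succAbove 0) v.succAbove).det| ≤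
        Real.cos α * (Real.sin α) ^ (d - (v.val + 1))) ∧
    -- (iv) if 1 < u < v, |det(Q_{uv})| ≤ cos α (sin α)^{d+u-v-2}
    (∀ u v : Fin (n + 2), u ≠ 0 → u < v →
      |(Q.submatrix u.succAbove v.succAbove).det| ≤
        Real.cos α * (Real.sin α) ^ (d + (u.val + 1) - (v.val + 1) - 2)) := by
  subst hd
  set s := Real.sin α with hs_def
  set c := Real.cos α with hc_def
  have hπ : α < π := hα'.trans (by linarith [Real.pi_pos])
  have hs : 0 < s := Real.sin_pos_of_pos_of_lt_pi hα hπ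
  have hs1 : s ≤ 1 := Real.sin_le_one α
  have hc : 0 < c := Real.cos_pos_of_mem_Ioo ⟨by linarith, hα'⟩
  have hpyth : s ^ 2 + c ^ 2 = 1 := Real.sin_sq_add_cos_sq α
  -- triangularity and determinant of Q
  have hQtri : Q.BlockTriangular OrderDual.toDual := fun i j h => hlower i j h
  have hdet : Q.det = s ^ (n + 1) := by
    rw [Matrix.det_of_lowerTriangular Q hQtri, Fin.prod_univ_succ, hdiag0, one_mul]
    rw [Finset.prod_congr rfl (fun i _ => hdiag i.succ (Fin.succ_ne_zero i)),
      Finset.prod_const, Finset.card_univ, Fintype.card_fin]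
  have hdetu : IsUnit Q.det := by
    rw [hdet]; exact isUnit_iff_ne_zero.mpr (pow_ne_zero _ hs.ne')
  have : Invertible Q := Q.invertibleOfIsUnitDet hdetu
  set R := Q⁻¹ with hR_def
  have hRtri : R.BlockTriangular OrderDual.toDual :=
    Matrix.blockTriangular_inv_of_blockTriangular hQtri
  have hRzero : ∀ i j : Fin (n + 2), i < j → R i j = 0 := fun i j h => hRtri h
  -- entries of Q * R = 1
  have hmul : ∀ v u : Fin (n + 2), ∑ k, Q v k * R k u = if v = u then 1 else 0 := by
    intro v u
    have h := congrFun (congrFun (Matrix.mul_nonsing_inv Q hdetu) v) u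
    simpa [Matrix.mul_apply, Matrix.one_apply] using h
  -- diagonal entries of R
  have hRdiag : ∀ i : Fin (n + 2), Q i i * R i i = 1 := by
    intro i
    have h := hmul i i
    rw [if_pos rfl] at h
    rw [← h]
    rw [Finset.sum_eq_single i]
    · intro b _ hb
      rcases lt_or_gt_of_ne hb with hlt | hgt
      · rw [hRzero b i hlt, mul_zero]
      · rw [hlower i b hgt, zero_mul]
    · intro h'; exact absurd (Finset.mem_univ i) h'
  have hR00 : R 0 0 = 1 := by
    have h := hRdiag 0; rw [hdiag0, one_mul] at h; exact h
  have hRdd : ∀ i : Fin (n + 2), i ≠ 0 → R i i = s⁻¹ := by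
    intro i hi
    have h := hRdiag i
    rw [hdiag i hi] at h
    field_simp at h ⊢
    linarith
  -- key Cauchy-Schwarz step
  have hkey : ∀ u v : Fin (n + 2), u < v →
      (s * R v u) ^ 2 ≤ c ^ 2 * ∑ k ∈ Finset.Ico u v, (R k u) ^ 2 := by
    intro u v huv
    have hv0 : v ≠ 0 := by
      intro h; rw [h] at huv; exact absurd huv (Fin.not_lt_zero u)
    have hQvv : Q v v = s := hdiag v hv0
    have h0 : ∑ k, Q v k * R k u = 0 := by
      have := hmul v u; rwa [if_neg (Fin.ne_of_gt huv)] at this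
    have hsub : ∑ k ∈ Finset.Icc u v, Q v k * R k u = 0 := by
      rw [← h0]
      apply Finset.sum_subset (Finset.subset_univ _)
      intro k _ hk
      rw [Finset.mem_Icc, not_and_or, not_le, not_le] at hk
      rcases hk with hk | hk
      · rw [hRzero k u hk, mul_zero]
      · rw [hlower v k hk, zero_mul]
    have hmemv : v ∈ Finset.Icc u v := Finset.mem_Icc.mpr ⟨huv.le, le_refl v⟩
    have hsplit : ∑ k ∈ Finset.Ico u v, Q v k * R k u + Q v v * R v u = 0 := by
      rw [← hsub, ← Finset.sum_erase_add (Finset.Icc u v) _ hmemv]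
      congr 1
      exact Finset.sum_congr (Finset.Icc_erase_right u v).symm (fun _ _ => rfl)
    have hsr : s * R v u = -(∑ k ∈ Finset.Ico u v, Q v k * R k u) := by
      rw [hQvv] at hsplit; linarith
    have hCS := Finset.sum_mul_sq_le_sq_mul_sq (Finset.Ico u v)
      (fun k => Q v k) (fun k => R k u)
    have hrow : ∑ k ∈ Finset.Ico u v, (Q v k) ^ 2 ≤ c ^ 2 := by
      have h1 : ∑ k ∈ Finset.Icc u v, (Q v k) ^ 2 ≤ 1 := by
        rw [← hunit v]
        exact Finset.sum_le_sum_of_subset_of_nonneg (Finset.subset_univ _)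
          (fun _ _ _ => sq_nonneg _)
      have h2 : ∑ k ∈ Finset.Ico u v, (Q v k) ^ 2 + (Q v v) ^ 2
          = ∑ k ∈ Finset.Icc u v, (Q v k) ^ 2 := by
        rw [← Finset.sum_erase_add (Finset.Icc u v) _ hmemv]
        congr 1
        exact Finset.sum_congr (Finset.Icc_erase_right u v).symm (fun _ _ => rfl)
      rw [hQvv] at h2
      linarith
    have hsum_nonneg : (0:ℝ) ≤ ∑ k ∈ Finset.Ico u v, (R k u) ^ 2 :=
      Finset.sum_nonneg fun _ _ => sq_nonneg _
    calc (s * R v u) ^ 2 = (∑ k ∈ Finset.Ico u v, Q v k * R k u) ^ 2 := by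
          rw [hsr, neg_sq]
      _ ≤ (∑ k ∈ Finset.Ico u v, (Q v k) ^ 2) * ∑ k ∈ Finset.Ico u v, (R k u) ^ 2 := hCS
      _ ≤ c ^ 2 * ∑ k ∈ Finset.Ico u v, (R k u) ^ 2 :=
          mul_le_mul_of_nonneg_right hrow hsum_nonneg
  -- main induction
  have hmain : ∀ (u : Fin (n + 2)) (m : ℕ) (v : Fin (n + 2)), v.val = u.val + m →
      s ^ (2 * (m - 1)) * ∑ k ∈ Finset.Ico u v, (R k u) ^ 2 ≤ (R u u) ^ 2 := by
    intro u m
    induction m with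
    | zero =>
      intro v hv
      have hvu : v = u := Fin.ext (by omega)
      rw [hvu, Finset.Ico_self, Finset.sum_empty, mul_zero]
      exact sq_nonneg _
    | succ m ih =>
      intro v hv
      have hm2 : u.val + m < n + 2 := by
        have := v.isLt; omega
      set v' : Fin (n + 2) := ⟨u.val + m, hm2⟩ with hv'_def
      have huv' : u ≤ v' := by
        rw [Fin.le_def]; simp [hv'_def]
      have hmemv' : v' ∈ Finset.Icc u v' := Finset.mem_Icc.mpr ⟨huv', le_refl v'⟩
      have hIco : Finset.Ico u v = Finset.Icc u v' := by
        ext k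
        simp only [Finset.mem_Ico, Finset.mem_Icc, Fin.lt_def, Fin.le_def]
        have hv'v : (v' : ℕ) = u.val + m := rfl
        omega
      have hsplit : ∑ k ∈ Finset.Ico u v, (R k u) ^ 2
          = ∑ k ∈ Finset.Ico u v', (R k u) ^ 2 + (R v' u) ^ 2 := by
        rw [hIco, ← Finset.sum_erase_add (Finset.Icc u v') _ hmemv']
        congr 1
        exact Finset.sum_congr (Finset.Icc_erase_right u v') (fun _ _ => rfl)
      rcases Nat.eq_zero_or_pos m with hm | hm
      · subst hm
        have hv'u : v' = u := Fin.ext (by simp [hv'_def])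
        rw [hsplit, hv'u, Finset.Ico_self, Finset.sum_empty, zero_add]
        have : s ^ (2 * (0 + 1 - 1)) = 1 := by norm_num
        rw [this, one_mul, zero_add]
      · have huv'lt : u < v' := by rw [Fin.lt_def]; simp [hv'_def]; omega
        have hk := hkey u v' huv'lt
        have hih := ih v' rfl
        have hPnn : (0:ℝ) ≤ s ^ (2 * (m - 1)) := pow_nonneg hs.le _
        have hA_nonneg : (0:ℝ) ≤ ∑ k ∈ Finset.Ico u v', (R k u) ^ 2 :=
          Finset.sum_nonneg fun _ _ => sq_nonneg _
        have hexp : 2 * (m + 1 - 1) = 2 * (m - 1) + 2 := by omega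
        rw [hsplit, hexp]
        have hstep : s ^ 2 * (R v' u) ^ 2 ≤ c ^ 2 * ∑ k ∈ Finset.Ico u v', (R k u) ^ 2 := by
          calc s ^ 2 * (R v' u) ^ 2 = (s * R v' u) ^ 2 := by ring
            _ ≤ _ := hk
        calc s ^ (2 * (m - 1) + 2) *
              (∑ k ∈ Finset.Ico u v', (R k u) ^ 2 + (R v' u) ^ 2)
            = s ^ (2 * (m - 1)) *
              (s ^ 2 * ∑ k ∈ Finset.Ico u v', (R k u) ^ 2 + s ^ 2 * (R v' u) ^ 2) := by
              rw [pow_add]; ring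
          _ ≤ s ^ (2 * (m - 1)) *
              (s ^ 2 * ∑ k ∈ Finset.Ico u v', (R k u) ^ 2
                + c ^ 2 * ∑ k ∈ Finset.Ico u v', (R k u) ^ 2) := by
              apply mul_le_mul_of_nonneg_left _ hPnn
              linarith
          _ = s ^ (2 * (m - 1)) * ((s ^ 2 + c ^ 2) * ∑ k ∈ Finset.Ico u v', (R k u) ^ 2) := by
              ring
          _ = s ^ (2 * (m - 1)) * ∑ k ∈ Finset.Ico u v', (R k u) ^ 2 := by
              rw [hpyth, one_mul]
          _ ≤ (R u u) ^ 2 := hih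
  -- scalar bound on entries of R below the diagonal
  have habs : ∀ u v : Fin (n + 2), u < v →
      s ^ (v.val - u.val) * |R v u| ≤ c * |R u u| := by
    intro u v huv
    have huvn : u.val < v.val := huv
    have hm := hmain u (v.val - u.val) v (by omega)
    have hk := hkey u v huv
    have hPnn : (0:ℝ) ≤ s ^ (2 * (v.val - u.val - 1)) := pow_nonneg hs.le _
    have hsq : (s ^ (v.val - u.val) * |R v u|) ^ 2 ≤ (c * |R u u|) ^ 2 := by
      have hexp : 2 * (v.val - u.val) = 2 * (v.val - u.val - 1) + 2 := by omega
      calc (s ^ (v.val - u.val) * |R v u|) ^ 2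
          = s ^ (2 * (v.val - u.val - 1)) * (s * R v u) ^ 2 := by
            rw [mul_pow, ← pow_mul, sq_abs, Nat.mul_comm, hexp, pow_add]; ring
        _ ≤ s ^ (2 * (v.val - u.val - 1)) *
            (c ^ 2 * ∑ k ∈ Finset.Ico u v, (R k u) ^ 2) :=
            mul_le_mul_of_nonneg_left hk hPnn
        _ = c ^ 2 * (s ^ (2 * (v.val - u.val - 1)) * ∑ k ∈ Finset.Ico u v, (R k u) ^ 2) := by
            ring
        _ ≤ c ^ 2 * (R u u) ^ 2 := mul_le_mul_of_nonneg_left hm (sq_nonneg c)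
        _ = (c * |R u u|) ^ 2 := by rw [mul_pow, sq_abs]
    have hX : (0:ℝ) ≤ s ^ (v.val - u.val) * |R v u| := by positivity
    have hY : (0:ℝ) ≤ c * |R u u| := by positivity
    calc s ^ (v.val - u.val) * |R v u|
        = Real.sqrt ((s ^ (v.val - u.val) * |R v u|) ^ 2) := (Real.sqrt_sq hX).symm
      _ ≤ Real.sqrt ((c * |R u u|) ^ 2) := Real.sqrt_le_sqrt hsq
      _ = c * |R u u| := Real.sqrt_sq hY
  -- expression of the minors via R
  have hminor : ∀ u v : Fin (n + 2), (Q.submatrix u.succAbove v.succAbove).det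
      = (-1:ℝ) ^ (u.val + v.val) * (s ^ (n + 1) * R v u) := by
    intro u v
    have h := Matrix.adjugate_fin_succ_eq_det_submatrix Q v u
    have h2 : Q.adjugate v u = Q.det * R v u := by
      rw [hR_def, Matrix.inv_def, Matrix.smul_apply, Ring.inverse_eq_inv', smul_eq_mul,
        ← mul_assoc, mul_inv_cancel₀ hdetu.ne_zero, one_mul]
    have hsign : ((-1:ℝ) ^ (u.val + v.val)) * ((-1:ℝ) ^ (u.val + v.val)) = 1 := by
      rw [← pow_add]
      exact Even.neg_one_pow ⟨u.val + v.val, by ring⟩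
    have : (-1:ℝ) ^ (u.val + v.val) * Q.adjugate v u
        = (-1:ℝ) ^ (u.val + v.val) * ((-1:ℝ) ^ (u.val + v.val)
          * (Q.submatrix u.succAbove v.succAbove).det) := by rw [← h]
    rw [← mul_assoc, hsign, one_mul] at this
    rw [← this, h2, hdet]
  refine ⟨?_, ?_, ?_, ?_, ?_⟩
  -- (i)
  · intro u v hvu
    rw [hminor u v, hRzero v u hvu]
    ring
  -- (ii) first part
  · rw [hminor 0 0, hR00]
    norm_num
  -- (ii) second part
  · intro u hu
    rw [hminor u u, hRdd u hu]
    have heven : Even (u.val + u.val) := ⟨u.val, rfl⟩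
    rw [heven.neg_one_pow, one_mul]
    rw [pow_succ, mul_assoc, mul_inv_cancel₀ hs.ne', mul_one]
    norm_num
  -- (iii)
  · intro v hv
    have h0v : (0 : Fin (n + 2)) < v := Fin.pos_of_ne_zero hv
    have hvle : v.val ≤ n + 1 := by have := v.isLt; omega
    have hv1 : 1 ≤ v.val := h0v
    rw [hminor 0 v]
    rw [abs_mul, abs_pow, abs_neg, abs_one, one_pow, one_mul, abs_mul,
      abs_of_pos (pow_pos hs (n + 1))]
    have hb := habs 0 v h0v
    rw [hR00, abs_one, mul_one] at hb
    simp only [Fin.val_zero, Nat.sub_zero] at hb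
    have hexp : n + 2 - (v.val + 1) = n + 1 - v.val := by omega
    rw [hexp]
    have hpow : s ^ (n + 1) = s ^ (n + 1 - v.val) * s ^ v.val := by
      rw [← pow_add]
      congr 1
      omega
    calc s ^ (n + 1) * |R v 0| = s ^ (n + 1 - v.val) * (s ^ v.val * |R v 0|) := by
          rw [hpow]; ring
      _ ≤ s ^ (n + 1 - v.val) * c :=
          mul_le_mul_of_nonneg_left hb (pow_nonneg hs.le _)
      _ = c * s ^ (n + 1 - v.val) := by ring
  -- (iv)
  · intro u v hu huv
    have huvn : u.val < v.val := huv
    have hvle : v.val ≤ n + 1 := by have := v.isLt; omega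
    have hu1 : 1 ≤ u.val := Fin.pos_of_ne_zero hu
    rw [hminor u v]
    rw [abs_mul, abs_pow, abs_neg, abs_one, one_pow, one_mul, abs_mul,
      abs_of_pos (pow_pos hs (n + 1))]
    have hb := habs u v huv
    rw [hRdd u hu, abs_of_pos (inv_pos.mpr hs)] at hb
    have hb2 : s ^ (v.val - u.val + 1) * |R v u| ≤ c := by
      have := mul_le_mul_of_nonneg_left hb hs.le
      calc s ^ (v.val - u.val + 1) * |R v u|
          = s * (s ^ (v.val - u.val) * |R v u|) := by rw [pow_succ]; ring
        _ ≤ s * (c * s⁻¹) := this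
        _ = c := by field_simp
    have hexp : n + 2 + (u.val + 1) - (v.val + 1) - 2 = n + u.val - v.val := by omega
    rw [hexp]
    have hpow : s ^ (n + 1) = s ^ (n + u.val - v.val) * s ^ (v.val - u.val + 1) := by
      rw [← pow_add]
      congr 1
      omega
    calc s ^ (n + 1) * |R v u|
        = s ^ (n + u.val - v.val) * (s ^ (v.val - u.val + 1) * |R v u|) := by
          rw [hpow]; ring
      _ ≤ s ^ (n + u.val - v.val) * c :=
          mul_le_mul_of_nonneg_left hb2 (pow_nonneg hs.le _)
      _ = c * s ^ (n + u.val - v.val) := by ring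
end

section
/- For every integer i ≥ 2 and every real 0 < α < π/2, with C_i(α) = 1/sin α + cos α/(sin α)^{i−1} + cos α (1 − (sin α)^{i−2}) / ((sin α)^{i−1} (1 − sin α)), we have 1 + C_i(α)/cos α < (2 − sin α) / ((1 − sin α)(sin α)^{i−1}). -/
open Real

theorem one_add_C_div_cos_lt (i : ℕ) (hi : 2 ≤ i) (α : ℝ) (h0 : 0 < α) (h1 : α < π / 2) :
    1 + (1 / Real.sin α + Real.cos α / (Real.sin α) ^ (i - 1) +
      Real.cos α * (1 - (Real.sin α) ^ (i - 2)) /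
        ((Real.sin α) ^ (i - 1) * (1 - Real.sin α))) / Real.cos α <
    (2 - Real.sin α) / ((1 - Real.sin α) * (Real.sin α) ^ (i - 1)) := by
  obtain ⟨k, rfl⟩ : ∃ k, i = k + 2 := ⟨i - 2, by omega⟩
  set s := Real.sin α with hs
  set c := Real.cos α with hc
  have hpyth : s ^ 2 + c ^ 2 = 1 := Real.sin_sq_add_cos_sq α
  have hs0 : 0 < s := Real.sin_pos_of_pos_of_lt_pi h0 (by linarith [Real.pi_pos])
  have hc0 : 0 < c := Real.cos_pos_of_mem_Ioo ⟨by linarith [Real.pi_pos], h1⟩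
  have hs1 : s < 1 := by nlinarith
  have hc1 : c < 1 := by nlinarith
  have hsk : (0:ℝ) < s ^ k := pow_pos hs0 k
  have h1s : (0:ℝ) < 1 - s := by linarith
  have he1 : k + 2 - 1 = k + 1 := rfl
  have he2 : k + 2 - 2 = k := rfl
  rw [he1, he2, pow_succ]
  have key : (2 - s) / ((1 - s) * (s ^ k * s)) -
      (1 + (1 / s + c / (s ^ k * s) + c * (1 - s ^ k) / (s ^ k * s * (1 - s))) / c) =
      1 / ((1 - s) * s) - 1 - 1 / (s * c) := by
    field_simp
    ring
  have pos : 0 < 1 / ((1 - s) * s) - 1 - 1 / (s * c) := by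
    rw [sub_sub, sub_pos]
    have e : 1 + 1 / (s * c) = (s * c + 1) / (s * c) := by field_simp
    rw [e, div_lt_div_iff₀ (by positivity) (by positivity)]
    have hfac : 0 < c * (1 + s ^ 3 - c) := by
      apply mul_pos hc0; nlinarith [pow_pos hs0 3]
    nlinarith [mul_pos hs0 hfac, mul_pos h1s hs0]
  linarith
end

section
/- Let d ≥ 2 and 0 < α < π/2. Define C_1(α) = 1 and, for i ≥ 2, C_i(α) = 1/sin α + cos α/(sin α)^{i−1} + cos α (1 − (sin α)^{i−2})/((sin α)^{i−1}(1 − sin α)). Define F_d(α) = C_d(α) and F_i(α) = (1 + C_i(α)/cos α) · F_{i+1}(α) for 1 ≤ i < d. Then F_1(α) ≤ (1 + cos α) · ((2 − sin α)/(1 − sin α))^{d−1} · (sin α)^{−d(d−1)/2}. -/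
open Real

/-- `C α i` : the bound `C_i(α)` on curve-length ratios, with `C_1(α) = 1`. -/
noncomputable def C (α : ℝ) (i : ℕ) : ℝ :=
  if i ≤ 1 then 1
  else 1 / Real.sin α + Real.cos α / (Real.sin α) ^ (i - 1) +
    Real.cos α * (1 - (Real.sin α) ^ (i - 2)) /
      ((Real.sin α) ^ (i - 1) * (1 - Real.sin α))

/-- `F α d i` : defined by downward recursion `F_d = C_d`,
`F_i = (1 + C_i/cos α) · F_{i+1}` for `i < d`. -/
noncomputable def F (α : ℝ) (d : ℕ) : ℕ → ℝ := fun i =>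
  if h : d ≤ i then C α d
  else (1 + C α i / Real.cos α) * F α d (i + 1)
termination_by i => d - i
decreasing_by omega

/-!
Unrolling the recursion gives `F_1 = C_d · ∏_{1 ≤ j < d} (1 + C_j / cos α)`. The factor `j = 1` is
`(1 + cos α) / cos α`; every factor with `j ≥ 2` is at most `(2 - sin α)/(1 - sin α) · (sin α)^{-(j-1)}`,
and `C_d` is at most `cos α` times the same bound for `j = d`. After clearing denominators the factor
bound is `1 - sin α ≤ cos α (1 - sin α + sin² α)`, a consequence of `sin² α + cos² α = 1`. The
exponents of `1 / sin α` add up to `1 + 2 + ⋯ + (d - 1) = d(d-1)/2`.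
-/

open Finset

theorem sin_lt_one_of_cos_ne_zero {α : ℝ} (hc : cos α ≠ 0) : sin α < 1 := by
  nlinarith [sin_sq_add_cos_sq α, sin_le_one α, sq_pos_of_ne_zero hc]

section CBound

variable {α : ℝ} (hs : 0 < sin α) (hc : 0 < cos α)
include hs hc

theorem C_nonneg (i : ℕ) : 0 ≤ C α i := by
  have hs1 : sin α ^ (i - 2) ≤ 1 := pow_le_one₀ hs.le (sin_le_one α)
  have hs2 := sin_lt_one_of_cos_ne_zero hc.ne'
  unfold C
  split_ifs
  · exact zero_le_one
  · have : 0 ≤ 1 - sin α ^ (i - 2) := by linarith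
    have : 0 < 1 - sin α := by linarith
    positivity

theorem one_sub_sin_le_cos_mul : 1 - sin α ≤ cos α * (1 - sin α + sin α ^ 2) := by
  nlinarith [sin_sq_add_cos_sq α, cos_le_one α, mul_pos hs hc]

theorem one_add_C_div_cos_le (k : ℕ) :
    1 + C α (k + 2) / cos α ≤ (2 - sin α) / (1 - sin α) * (1 / sin α) ^ (k + 1) := by
  have h1s : 0 < 1 - sin α := by linarith [sin_lt_one_of_cos_ne_zero hc.ne']
  rw [C, if_neg (by omega), show k + 2 - 1 = k + 1 by omega, show k + 2 - 2 = k by omega,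
    ← sub_nonneg]
  have gap : (2 - sin α) / (1 - sin α) * (1 / sin α) ^ (k + 1) -
      (1 + (1 / sin α + cos α / sin α ^ (k + 1) +
        cos α * (1 - sin α ^ k) / (sin α ^ (k + 1) * (1 - sin α))) / cos α)
      = (cos α * (1 - sin α + sin α ^ 2) - (1 - sin α)) / (cos α * sin α * (1 - sin α)) := by
    rw [one_div_pow]
    field_simp
    ring
  rw [gap]
  exact div_nonneg (sub_nonneg.mpr (one_sub_sin_le_cos_mul hs hc)) (by positivity)

theorem C_le_cos_mul (k : ℕ) :
    C α (k + 2) ≤ cos α * ((2 - sin α) / (1 - sin α) * (1 / sin α) ^ (k + 1)) := by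
  have h := one_add_C_div_cos_le hs hc k
  rw [← div_le_iff₀' hc]
  linarith

end CBound

theorem F_eq_mul_prod (α : ℝ) (d i : ℕ) :
    F α d i = C α d * ∏ j ∈ Ico i d, (1 + C α j / cos α) := by
  induction h : d - i generalizing i with
  | zero => rw [F, dif_pos (by omega), Ico_eq_empty_of_le (by omega), prod_empty, mul_one]
  | succ n ih =>
    rw [F, dif_neg (by omega), prod_eq_prod_Ico_succ_bot (by omega), ih (i + 1) (by omega)]
    ring

theorem F_one_eq (α : ℝ) (n : ℕ) :
    F α (n + 2) 1 =
      (1 + 1 / cos α) * ((∏ k ∈ range n, (1 + C α (k + 2) / cos α)) * C α (n + 2)) := by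
  rw [F_eq_mul_prod, prod_Ico_eq_prod_range, show n + 2 - 1 = n + 1 by omega, prod_range_succ']
  simp only [C, le_refl, if_true, show ∀ k, 1 + (k + 1) = k + 2 by omega]
  ring

theorem prod_range_mul_one_div_pow (r s : ℝ) (m : ℕ) :
    ∏ k ∈ range m, r * (1 / s) ^ (k + 1) = r ^ m / s ^ ((m + 1) * m / 2) := by
  have gauss : ∑ k ∈ range m, (k + 1) = (m + 1) * m / 2 := by
    simpa [sum_range_succ'] using sum_range_id (m + 1)
  rw [prod_mul_distrib, prod_const, card_range, prod_pow_eq_pow_sum, gauss, one_div_pow,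
    ← div_eq_mul_one_div]

theorem F_one_upper_bound (d : ℕ) (hd : 2 ≤ d) (α : ℝ) (h0 : 0 < α) (h1 : α < π / 2) :
    F α d 1 ≤ (1 + Real.cos α) * ((2 - Real.sin α) / (1 - Real.sin α)) ^ (d - 1) /
      (Real.sin α) ^ (d * (d - 1) / 2) := by
  have hs : 0 < sin α := sin_pos_of_pos_of_lt_pi h0 (by linarith [pi_pos])
  have hc : 0 < cos α := cos_pos_of_mem_Ioo ⟨by linarith, h1⟩
  have hr : 0 < (2 - sin α) / (1 - sin α) := by
    have := sin_lt_one_of_cos_ne_zero hc.ne'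
    exact div_pos (by linarith) (by linarith)
  obtain ⟨n, rfl⟩ : ∃ n, d = n + 2 := ⟨d - 2, by omega⟩
  calc F α (n + 2) 1
      = (1 + 1 / cos α) * ((∏ k ∈ range n, (1 + C α (k + 2) / cos α)) * C α (n + 2)) :=
        F_one_eq α n
    _ ≤ (1 + 1 / cos α) * ((∏ k ∈ range n, (2 - sin α) / (1 - sin α) * (1 / sin α) ^ (k + 1)) *
          (cos α * ((2 - sin α) / (1 - sin α) * (1 / sin α) ^ (n + 1)))) := by
        gcongr with k
        · exact C_nonneg hs hc _
        · intro k _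
          have := C_nonneg hs hc (k + 2)
          positivity
        · exact one_add_C_div_cos_le hs hc k
        · exact C_le_cos_mul hs hc n
    _ = (1 + cos α) * ∏ k ∈ range (n + 1), (2 - sin α) / (1 - sin α) * (1 / sin α) ^ (k + 1) := by
        rw [prod_range_succ]
        field_simp
        ring
    _ = _ := by
        rw [prod_range_mul_one_div_pow, mul_div_assoc]
        congr 3
end
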